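/- arXiv:2012.14306 — 2 statements merged into one kernel-verified Lean document; each statement's English description precedes it below -/
import Mathlib

section
/- Suppose E : [t₀, ∞) → ℝ is a nonnegative C¹ function satisfying E'(t) ≤ −(8/15)t⁻¹E(t) + C t^{−4/3−α} + C t^{−1−3α} for all t ≥ t₀ > 0, where C > 0 and 1/5 < α < 4/15. Then there exists a constant C' > 0 such that E(t) ≤ C' t^{−8/15} for all t ≥ t₀. -/
/-!
Multiplying by the integrating factor `t ^ (8/15)` turns the inequality into
`(t ^ (8/15) E)' ≤ C t ^ (-1 - a) + C t ^ (-1 - b)` with `a = α - 1/5 > 0` and `b = 3α - 8/15 > 0`.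
The right-hand side is the derivative of `-(C t ^ (-a) / a + C t ^ (-b) / b)`, a nonpositive
function, so `t ^ (8/15) E(t)` plus that nonnegative tail is antitone and hence bounded by its value
at `t₀`.
-/

open Set Real

theorem antitoneOn_Ici_of_hasDerivAt_nonpos {t₀ : ℝ} {f f' : ℝ → ℝ}
    (hf : ∀ t ≥ t₀, HasDerivAt f (f' t) t) (hf' : ∀ t ≥ t₀, f' t ≤ 0) :
    AntitoneOn f (Ici t₀) := by
  refine antitoneOn_of_hasDerivWithinAt_nonpos (f' := f') (convex_Ici t₀)
    (fun t ht ↦ (hf t ht).continuousAt.continuousWithinAt) (fun t ht ↦ ?_) (fun t ht ↦ ?_)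
  all_goals rw [interior_Ici] at ht
  · exact (hf t ht.le).hasDerivWithinAt
  · exact hf' t ht.le

theorem hasDerivAt_rpow_neg_div {a t : ℝ} (ha : a ≠ 0) (ht : 0 < t) :
    HasDerivAt (fun x ↦ x ^ (-a) / a) (-t ^ (-a - 1)) t := by
  have h := (hasDerivAt_rpow_const (p := -a) (Or.inl ht.ne')).div_const a
  rwa [neg_mul, neg_div, mul_div_cancel_left₀ _ ha] at h

section IntegratingFactor

variable {k t₀ : ℝ} {E E' H H' : ℝ → ℝ}

theorem antitoneOn_rpow_mul_add_of_hasDerivAt (ht₀ : 0 < t₀)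
    (hE : ∀ t ≥ t₀, HasDerivAt E (E' t) t) (hH : ∀ t ≥ t₀, HasDerivAt H (H' t) t)
    (hineq : ∀ t ≥ t₀, E' t ≤ -k * t⁻¹ * E t - t ^ (-k) * H' t) :
    AntitoneOn (fun t ↦ t ^ k * E t + H t) (Ici t₀) := by
  refine antitoneOn_Ici_of_hasDerivAt_nonpos
    (f' := fun t ↦ k * t ^ (k - 1) * E t + t ^ k * E' t + H' t) (fun t ht ↦ ?_) (fun t ht ↦ ?_)
  · have ht' : 0 < t := ht₀.trans_le ht
    exact ((hasDerivAt_rpow_const (Or.inl ht'.ne')).mul (hE t ht)).add (hH t ht)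
  · have ht' : 0 < t := ht₀.trans_le ht
    have hweight : t ^ k * E' t ≤ t ^ k * (-k * t⁻¹ * E t - t ^ (-k) * H' t) :=
      mul_le_mul_of_nonneg_left (hineq t ht) (rpow_nonneg ht'.le k)
    have hinv : t ^ k * t⁻¹ = t ^ (k - 1) := by rw [rpow_sub_one ht'.ne', div_eq_mul_inv]
    have hneg : t ^ k * t ^ (-k) = 1 := by rw [← rpow_add ht', add_neg_cancel, rpow_zero]
    linear_combination hweight - k * E t * hinv - H' t * hneg

theorem le_mul_rpow_neg_of_antitoneOn (ht₀ : 0 < t₀)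
    (hG : AntitoneOn (fun t ↦ t ^ k * E t + H t) (Ici t₀)) (hH : ∀ t ≥ t₀, 0 ≤ H t) {t : ℝ}
    (ht : t₀ ≤ t) : E t ≤ (t₀ ^ k * E t₀ + H t₀) * t ^ (-k) := by
  have ht' : 0 < t := ht₀.trans_le ht
  have hmono : t ^ k * E t + H t ≤ t₀ ^ k * E t₀ + H t₀ := hG self_mem_Ici ht ht
  calc E t = (t ^ k * E t) * t ^ (-k) := by
        rw [mul_comm (t ^ k), mul_assoc, ← rpow_add ht', add_neg_cancel, rpow_zero, mul_one]
    _ ≤ (t₀ ^ k * E t₀ + H t₀) * t ^ (-k) := by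
        gcongr
        linarith [hH t ht]

end IntegratingFactor

theorem exists_le_mul_rpow_neg_of_deriv_le {k t₀ C a b : ℝ} {E E' : ℝ → ℝ} (ht₀ : 0 < t₀)
    (hC : 0 ≤ C) (ha : 0 < a) (hb : 0 < b) (hE : ∀ t ≥ t₀, HasDerivAt E (E' t) t)
    (hineq : ∀ t ≥ t₀,
      E' t ≤ -k * t⁻¹ * E t + C * t ^ (-k - a - 1) + C * t ^ (-k - b - 1)) :
    ∃ C' > 0, ∀ t ≥ t₀, E t ≤ C' * t ^ (-k) := by
  set H : ℝ → ℝ := fun t ↦ C * (t ^ (-a) / a + t ^ (-b) / b)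
  have hH : ∀ t ≥ t₀, HasDerivAt H (C * (-t ^ (-a - 1) + -t ^ (-b - 1))) t := fun t ht ↦
    ((hasDerivAt_rpow_neg_div ha.ne' (ht₀.trans_le ht)).add
      (hasDerivAt_rpow_neg_div hb.ne' (ht₀.trans_le ht))).const_mul C
  have hHnonneg : ∀ t ≥ t₀, 0 ≤ H t := fun t ht ↦ by
    have ht' : 0 < t := ht₀.trans_le ht
    positivity
  have hG := antitoneOn_rpow_mul_add_of_hasDerivAt ht₀ hE hH fun t ht ↦ by
    have ht' : 0 < t := ht₀.trans_le ht
    have hsplit (c : ℝ) : t ^ (-k - c - 1) = t ^ (-k) * t ^ (-c - 1) := by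
      rw [← rpow_add ht']; ring_nf
    linear_combination hineq t ht + C * hsplit a + C * hsplit b
  refine ⟨max (t₀ ^ k * E t₀ + H t₀) 1, by positivity, fun t ht ↦
    (le_mul_rpow_neg_of_antitoneOn ht₀ hG hHnonneg ht).trans ?_⟩
  exact mul_le_mul_of_nonneg_right (le_max_left _ _) (rpow_nonneg (ht₀.trans_le ht).le _)

theorem stmt_4_general (t₀ C α : ℝ) (ht₀ : 0 < t₀) (hC : 0 < C)
    (hα₁ : 1 / 5 < α)
    (E E' : ℝ → ℝ)
    (hE : ∀ t ≥ t₀, HasDerivAt E (E' t) t)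
    (hineq : ∀ t ≥ t₀, E' t ≤ -(8 / 15) * t⁻¹ * E t
      + C * t ^ (-(4 : ℝ) / 3 - α) + C * t ^ (-1 - 3 * α)) :
    ∃ C' > 0, ∀ t ≥ t₀, E t ≤ C' * t ^ (-(8 : ℝ) / 15) := by
  have hdecay := exists_le_mul_rpow_neg_of_deriv_le (k := 8 / 15) (a := α - 1 / 5)
    (b := 3 * α - 8 / 15) ht₀ hC.le (by linarith) (by linarith) hE fun t ht ↦ by
      convert hineq t ht using 4 <;> ring
  convert hdecay using 5
  ring

theorem stmt_4 (t₀ C α : ℝ) (ht₀ : 0 < t₀) (hC : 0 < C)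
    (hα₁ : 1 / 5 < α) (hα₂ : α < 4 / 15)
    (E E' : ℝ → ℝ)
    (hE : ∀ t ≥ t₀, HasDerivAt E (E' t) t)
    (hEnn : ∀ t ≥ t₀, 0 ≤ E t)
    (hineq : ∀ t ≥ t₀, E' t ≤ -(8 / 15) * t⁻¹ * E t
      + C * t ^ (-(4 : ℝ) / 3 - α) + C * t ^ (-1 - 3 * α)) :
    ∃ C' > 0, ∀ t ≥ t₀, E t ≤ C' * t ^ (-(8 : ℝ) / 15) :=
  stmt_4_general t₀ C α ht₀ hC hα₁ E E' hE hineq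
end

section
/- Suppose E : [t₀, ∞) → ℝ is a nonnegative C¹ function satisfying E'(t) ≤ −μ t⁻¹ E(t) + C t^{−1−2α} + C t^{−3−α} for all t ≥ t₀ > 0, where C > 0, 2 < α < 7/2, and 0 < μ < 2α with μ < 2 + α. Then there exists C' > 0 such that E(t) ≤ C' t^{−μ} for all t ≥ t₀. -/
/-!
Multiply by the integrating factor `t ^ μ`: the differential inequality says that
`t ^ μ * E t - G t` is antitone, where `G` is the antiderivative of the forcing term
`C t ^ (μ - 1 - 2α) + C t ^ (μ - 3 - α)` that vanishes at infinity. Both exponents are `< -1`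
because `μ < 2α` and `μ < 2 + α`, so `G < 0`, and therefore
`t ^ μ * E t ≤ t₀ ^ μ * E t₀ - G t₀`, a positive constant.
-/

open Set

section IntegratingFactor

variable {t₀ μ : ℝ} {E E' G g : ℝ → ℝ}

theorem antitoneOn_rpow_mul_sub_of_deriv_le (ht₀ : 0 < t₀)
    (hE : ∀ t ≥ t₀, HasDerivAt E (E' t) t) (hG : ∀ t ≥ t₀, HasDerivAt G (g t) t)
    (hineq : ∀ t ≥ t₀, E' t ≤ -μ * t⁻¹ * E t + t ^ (-μ) * g t) :
    AntitoneOn (fun t => t ^ μ * E t - G t) (Ici t₀) := by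
  have hderiv : ∀ t ≥ t₀, HasDerivAt (fun t => t ^ μ * E t - G t)
      (μ * t ^ (μ - 1) * E t + t ^ μ * E' t - g t) t := fun t ht =>
    ((Real.hasDerivAt_rpow_const (Or.inl (ht₀.trans_le ht).ne')).mul (hE t ht)).sub (hG t ht)
  refine antitoneOn_of_hasDerivWithinAt_nonpos (convex_Ici t₀)
    (fun t ht => (hderiv t ht).continuousAt.continuousWithinAt)
    (fun t ht => (hderiv t (interior_subset ht)).hasDerivWithinAt) fun t ht => ?_
  have ht : t₀ ≤ t := interior_subset ht
  have htpos : 0 < t := ht₀.trans_le ht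
  have hinv : t ^ μ * t⁻¹ = t ^ (μ - 1) := by
    rw [Real.rpow_sub_one htpos.ne', div_eq_mul_inv]
  have hcancel : t ^ μ * t ^ (-μ) = 1 := by
    rw [← Real.rpow_add htpos, add_neg_cancel, Real.rpow_zero]
  have hmul : t ^ μ * E' t ≤ -μ * t ^ (μ - 1) * E t + g t :=
    calc t ^ μ * E' t ≤ t ^ μ * (-μ * t⁻¹ * E t + t ^ (-μ) * g t) :=
          mul_le_mul_of_nonneg_left (hineq t ht) (by positivity)
      _ = -μ * (t ^ μ * t⁻¹) * E t + t ^ μ * t ^ (-μ) * g t := by ring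
      _ = -μ * t ^ (μ - 1) * E t + g t := by rw [hinv, hcancel, one_mul]
  linarith

theorem le_mul_rpow_neg_of_deriv_le (ht₀ : 0 < t₀)
    (hE : ∀ t ≥ t₀, HasDerivAt E (E' t) t) (hG : ∀ t ≥ t₀, HasDerivAt G (g t) t)
    (hineq : ∀ t ≥ t₀, E' t ≤ -μ * t⁻¹ * E t + t ^ (-μ) * g t)
    (hG_nonpos : ∀ t ≥ t₀, G t ≤ 0) :
    ∀ t ≥ t₀, E t ≤ (t₀ ^ μ * E t₀ - G t₀) * t ^ (-μ) := by
  intro t ht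
  have htpos : 0 < t := ht₀.trans_le ht
  have hmono := antitoneOn_rpow_mul_sub_of_deriv_le ht₀ hE hG hineq self_mem_Ici ht ht
  have hbound : t ^ μ * E t ≤ t₀ ^ μ * E t₀ - G t₀ := by
    have := hG_nonpos t ht
    simp only at hmono
    linarith
  calc E t = t ^ μ * E t * t ^ (-μ) := by
        rw [mul_right_comm, ← Real.rpow_add htpos, add_neg_cancel, Real.rpow_zero, one_mul]
    _ ≤ (t₀ ^ μ * E t₀ - G t₀) * t ^ (-μ) :=
        mul_le_mul_of_nonneg_right hbound (by positivity)

end IntegratingFactor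

theorem hasDerivAt_div_mul_rpow_add_one {r t : ℝ} (c : ℝ) (hr : r ≠ -1) (ht : 0 < t) :
    HasDerivAt (fun s => c / (r + 1) * s ^ (r + 1)) (c * t ^ r) t := by
  have hr' : r + 1 ≠ 0 := by contrapose! hr; linarith
  have h := (Real.hasDerivAt_rpow_const (p := r + 1) (Or.inl ht.ne')).const_mul (c / (r + 1))
  rwa [add_sub_cancel_right, ← mul_assoc, div_mul_cancel₀ c hr'] at h

theorem div_mul_rpow_add_one_neg {c r t : ℝ} (hc : 0 < c) (hr : r + 1 < 0) (ht : 0 < t) :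
    c / (r + 1) * t ^ (r + 1) < 0 :=
  mul_neg_of_neg_of_pos (div_neg_of_pos_of_neg hc hr) (Real.rpow_pos_of_pos ht _)

theorem rpow_neg_mul_rpow_add {t : ℝ} (ht : 0 < t) (μ r : ℝ) : t ^ (-μ) * t ^ (μ + r) = t ^ r := by
  rw [← Real.rpow_add ht, neg_add_cancel_left]

theorem stmt_5_general (t₀ C α μ : ℝ) (ht₀ : 0 < t₀) (hC : 0 < C)
    (hμ₁ : μ < 2 * α) (hμ₂ : μ < 2 + α)
    (E E' : ℝ → ℝ)
    (hE : ∀ t ≥ t₀, HasDerivAt E (E' t) t)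
    (hEnn : ∀ t ≥ t₀, 0 ≤ E t)
    (hineq : ∀ t ≥ t₀, E' t ≤ -μ * t⁻¹ * E t
      + C * t ^ (-1 - 2 * α) + C * t ^ (-3 - α)) :
    ∃ C' > 0, ∀ t ≥ t₀, E t ≤ C' * t ^ (-μ) := by
  set r₁ := μ + (-1 - 2 * α)
  set r₂ := μ + (-3 - α)
  have hr₁ : r₁ + 1 < 0 := by linarith
  have hr₂ : r₂ + 1 < 0 := by linarith
  set G : ℝ → ℝ := fun t => C / (r₁ + 1) * t ^ (r₁ + 1) + C / (r₂ + 1) * t ^ (r₂ + 1)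
  have hG : ∀ t ≥ t₀, HasDerivAt G (C * t ^ r₁ + C * t ^ r₂) t := fun t ht =>
    (hasDerivAt_div_mul_rpow_add_one C (by linarith) (ht₀.trans_le ht)).add
      (hasDerivAt_div_mul_rpow_add_one C (by linarith) (ht₀.trans_le ht))
  have hG_neg : ∀ t ≥ t₀, G t < 0 := fun t ht =>
    add_neg (div_mul_rpow_add_one_neg hC hr₁ (ht₀.trans_le ht))
      (div_mul_rpow_add_one_neg hC hr₂ (ht₀.trans_le ht))
  have hineq' : ∀ t ≥ t₀, E' t ≤ -μ * t⁻¹ * E t + t ^ (-μ) * (C * t ^ r₁ + C * t ^ r₂) := by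
    intro t ht
    rw [mul_add, mul_left_comm, mul_left_comm _ C, rpow_neg_mul_rpow_add (ht₀.trans_le ht),
      rpow_neg_mul_rpow_add (ht₀.trans_le ht), ← add_assoc]
    exact hineq t ht
  refine ⟨t₀ ^ μ * E t₀ - G t₀, ?_,
    le_mul_rpow_neg_of_deriv_le ht₀ hE hG hineq' fun t ht => (hG_neg t ht).le⟩
  have hE₀ : 0 ≤ t₀ ^ μ * E t₀ := mul_nonneg (by positivity) (hEnn t₀ le_rfl)
  linarith [hG_neg t₀ le_rfl]

theorem stmt_5 (t₀ C α μ : ℝ) (ht₀ : 0 < t₀) (hC : 0 < C)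
    (hα₁ : 2 < α) (hα₂ : α < 7 / 2)
    (hμ₀ : 0 < μ) (hμ₁ : μ < 2 * α) (hμ₂ : μ < 2 + α)
    (E E' : ℝ → ℝ)
    (hE : ∀ t ≥ t₀, HasDerivAt E (E' t) t)
    (hEnn : ∀ t ≥ t₀, 0 ≤ E t)
    (hineq : ∀ t ≥ t₀, E' t ≤ -μ * t⁻¹ * E t
      + C * t ^ (-1 - 2 * α) + C * t ^ (-3 - α)) :
    ∃ C' > 0, ∀ t ≥ t₀, E t ≤ C' * t ^ (-μ) :=
  stmt_5_general t₀ C α μ ht₀ hC hμ₁ hμ₂ E E' hE hEnn hineq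
end
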